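/- Let S be a decision rule system with n(S) > 0, let δ̄ ∈ EV(S), and let α be an equation system with α ⊆ K(S,δ̄) such that either S_α = ∅ or every rule of S_α has empty left-hand side. Then the set {r ∈ S : K(r) ∪ α is consistent} equals the set of rules of S that are realizable for δ̄. -/
import Mathlib


/-! Formalization of decision rule systems and decision trees
(Durdymyradov & Moshkov, "Greedy Algorithm for Inference of Decision Trees
from Decision Rule Systems"). -/

/-- Values of attributes: `some δ` is a natural number value, `none` is the
special symbol `*` (interpreted as a value not occurring in the system). -/
abbrev Val := Option ℕ

/-- A decision rule `(a_{i₁}=δ₁) ∧ ⋯ ∧ (a_{iₘ}=δₘ) → σ`: the left-hand side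
is a finite set of equations (attribute, value), the right-hand side a decision. -/
structure Rule where
  lhs : Finset (ℕ × ℕ)
  rhs : ℕ
deriving DecidableEq

namespace Rule

/-- `A(r)`: the set of attributes of a rule. -/
def attrs (r : Rule) : Finset ℕ := r.lhs.image Prod.fst

/-- `K(r)`: the equation system of the left-hand side of a rule. -/
def K (r : Rule) : Finset (ℕ × Val) := r.lhs.image (fun p => (p.1, some p.2))

/-- the length of a rule -/
def len (r : Rule) : ℕ := r.lhs.card

/-- A rule is wellformed if the attributes in its left-hand side are pairwise
different, i.e. each attribute carries at most one equation. -/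
def WF (r : Rule) : Prop := ∀ p ∈ r.lhs, ∀ q ∈ r.lhs, p.1 = q.1 → p = q

end Rule

/-- `A(S)`: the set of attributes of a system of decision rules. -/
def attrsS (S : Finset Rule) : Finset ℕ := S.biUnion Rule.attrs

/-- `n(S) = |A(S)|`. -/
def nS (S : Finset Rule) : ℕ := (attrsS S).card

/-- `d(S)`: maximum length of a rule of `S`. -/
def dS (S : Finset Rule) : ℕ := S.sup Rule.len

/-- `V_S(a)`: the set of values δ such that the equation `a = δ` occurs in `S`. -/
def VS (S : Finset Rule) (a : ℕ) : Finset ℕ :=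
  S.biUnion (fun r => (r.lhs.filter (fun p => p.1 = a)).image Prod.snd)

/-- `EV_S(a) = V_S(a) ∪ {*}`. -/
def EVS (S : Finset Rule) (a : ℕ) : Finset Val := insert none ((VS S a).image some)

/-- `k(S) = max{|V_S(a)| : a ∈ A(S)}`. -/
def kS (S : Finset Rule) : ℕ := (attrsS S).sup (fun a => (VS S a).card)

/-- A (wellformed) decision rule system: a finite nonempty set of wellformed rules. -/
def SysWF (S : Finset Rule) : Prop := S.Nonempty ∧ ∀ r ∈ S, r.WF

/-- An equation system is consistent if it does not assign two different values
to the same attribute. -/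
def Consistent (E : Finset (ℕ × Val)) : Prop :=
  ∀ p ∈ E, ∀ q ∈ E, p.1 = q.1 → p.2 = q.2

instance : DecidablePred Consistent := fun E => by unfold Consistent; infer_instance

/-- `r_α`: the rule obtained from `r` by deleting from its left-hand side all
equations belonging to `α`. -/
def Rule.restrict (r : Rule) (α : Finset (ℕ × Val)) : Rule :=
  ⟨r.lhs.filter (fun p => ((p.1, (some p.2 : Val)) ∉ α)), r.rhs⟩

/-- `S_α`: the set of rules `r_α` for `r ∈ S` with `K(r) ∪ α` consistent. -/
def sysRestrict (S : Finset Rule) (α : Finset (ℕ × Val)) : Finset Rule :=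
  (S.filter (fun r => Consistent (r.K ∪ α))).image (fun r => r.restrict α)

/-- Extended decision trees: terminal nodes are labeled with sets of rules, and a
working node is labeled with an attribute and has one child for each value
(only the children corresponding to values in `EV_S(a)` are relevant). -/
inductive DT where
  | leaf (τ : Finset Rule) : DT
  | node (a : ℕ) (c : Val → DT) : DT

/-- `Γ` is an extended decision tree over `S`: working nodes are labeled with
attributes of `A(S)` (with edges labeled by the elements of `EV_S(a)`),
terminal nodes with subsets of `S`. -/
def DT.Over (S : Finset Rule) : DT → Prop
  | .leaf τ => τ ⊆ S
  | .node a c => a ∈ attrsS S ∧ ∀ v ∈ EVS S a, DT.Over S (c v)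

/-- `h(Γ)`: the maximum number of working nodes in a complete path of `Γ`. -/
def DT.depth (S : Finset Rule) : DT → ℕ
  | .leaf _ => 0
  | .node a c => 1 + (EVS S a).sup (fun v => DT.depth S (c v))

/-- The number of terminal nodes of `Γ`. -/
def DT.numLeaves (S : Finset Rule) : DT → ℕ
  | .leaf _ => 1
  | .node a c => ∑ v ∈ EVS S a, DT.numLeaves S (c v)

/-- `Γ` solves `EAR(S)` starting from the already accumulated equation system `E`:
for every complete path `ξ` with consistent `K(ξ)`, every rule of the terminal
label `τ(ξ)` satisfies `K(r) ⊆ K(ξ)`, and every other rule of `S` has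
`K(r) ∪ K(ξ)` inconsistent. -/
def DT.SolvesFrom (S : Finset Rule) : DT → Finset (ℕ × Val) → Prop
  | .leaf τ, E => Consistent E →
      (∀ r ∈ τ, r.K ⊆ E) ∧ ∀ r ∈ S, r ∉ τ → ¬ Consistent (r.K ∪ E)
  | .node a c, E => ∀ v ∈ EVS S a, DT.SolvesFrom S (c v) (insert (a, v) E)

/-- `Γ` is a decision tree over `S` solving the problem `EAR(S)`. -/
def DT.SolvesEAR (S : Finset Rule) (Γ : DT) : Prop := Γ.Over S ∧ Γ.SolvesFrom S ∅

/-- `h_EAR(S)`: the minimum depth of a decision tree over `S` solving `EAR(S)`. -/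
noncomputable def hEAR (S : Finset Rule) : ℕ :=
  sInf {n | ∃ Γ : DT, DT.SolvesEAR S Γ ∧ DT.depth S Γ = n}

/-- A node cover of the hypergraph `G(S)`. -/
def IsNodeCover (S : Finset Rule) (B : Finset ℕ) : Prop :=
  B ⊆ attrsS S ∧ ∀ r ∈ S, r.attrs.Nonempty → (r.attrs ∩ B).Nonempty

/-- `β(S)`: the minimum cardinality of a node cover of `G(S)`. -/
noncomputable def betaS (S : Finset Rule) : ℕ :=
  sInf {k | ∃ B : Finset ℕ, IsNodeCover S B ∧ B.card = k}

/-- `M` is a possible choice of `S^max`: a set of rules of `S` of length `d(S)`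
containing exactly one representative from each equivalence class
(`r₁ ∼ r₂ iff K(r₁) = K(r₂)`) of the set of rules of length `d(S)`, and
no other rules. -/
def IsMaxSet (S M : Finset Rule) : Prop :=
  (∀ r ∈ M, r ∈ S ∧ r.len = dS S) ∧
  (∀ r ∈ S, r.len = dS S → ∃ r' ∈ M, r'.K = r.K) ∧
  (∀ r₁ ∈ M, ∀ r₂ ∈ M, r₁.K = r₂.K → r₁ = r₂)

/-- `δ̄ ∈ EV(S)`, a tuple represented as a function on attributes. -/
def InEV (S : Finset Rule) (f : ℕ → Val) : Prop := ∀ a ∈ attrsS S, f a ∈ EVS S a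

/-- `K(S, δ̄)`. -/
def KofTuple (S : Finset Rule) (f : ℕ → Val) : Finset (ℕ × Val) :=
  (attrsS S).image (fun a => (a, f a))

/-- The rule `r` is realizable for the tuple `δ̄`, i.e. `K(r) ⊆ K(S, δ̄)`. -/
def Realizable (S : Finset Rule) (f : ℕ → Val) (r : Rule) : Prop :=
  r.K ⊆ KofTuple S f

instance (S : Finset Rule) (f : ℕ → Val) : DecidablePred (Realizable S f) :=
  fun r => by unfold Realizable; infer_instance

/-- Let `S` be a decision rule system with `n(S) > 0`, `δ̄ ∈ EV(S)` (here the
function `f`), and let `α` be an equation system with `α ⊆ K(S, δ̄)` such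
that either `S_α = ∅` or every rule of `S_α` has empty left-hand side. Then
the set `{r ∈ S : K(r) ∪ α is consistent}` equals the set of rules of `S`
that are realizable for `δ̄`. -/
theorem consistent_eq_realizable (S : Finset Rule) (hS : SysWF S) (hn : 0 < nS S)
    (f : ℕ → Val) (hf : InEV S f)
    (α : Finset (ℕ × Val)) (hα : α ⊆ KofTuple S f)
    (hstop : sysRestrict S α = ∅ ∨ ∀ r ∈ sysRestrict S α, r.lhs = ∅) :
    S.filter (fun r => Consistent (r.K ∪ α)) = S.filter (fun r => Realizable S f r) := by
  ext r
  simp only [Finset.mem_filter]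
  constructor
  · rintro ⟨hr, hc⟩
    refine ⟨hr, ?_⟩
    have hmem : r.restrict α ∈ sysRestrict S α :=
      Finset.mem_image_of_mem _ (Finset.mem_filter.mpr ⟨hr, hc⟩)
    rcases hstop with h | h
    · rw [h] at hmem; exact absurd hmem (Finset.notMem_empty _)
    · have hl := h _ hmem
      unfold Rule.restrict at hl
      simp only [Finset.filter_eq_empty_iff, not_not] at hl
      intro x hx
      unfold Rule.K at hx
      simp only [Finset.mem_image] at hx
      obtain ⟨p, hp, rfl⟩ := hx
      exact hα (hl hp)
  · rintro ⟨hr, hreal⟩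
    refine ⟨hr, ?_⟩
    have hsub : r.K ∪ α ⊆ KofTuple S f := Finset.union_subset hreal hα
    intro p hp q hq h1
    have hp' := hsub hp
    have hq' := hsub hq
    unfold KofTuple at hp' hq'
    simp only [Finset.mem_image] at hp' hq'
    obtain ⟨a, _, rfl⟩ := hp'
    obtain ⟨b, _, rfl⟩ := hq'
    simp_all
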